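/- For any graph G, the symmetrized Tutte polynomial satisfies χ_G(t,t) = Σ_{H ⊆ E(G)} χ_{G|H}(0,t) · χ_{G/H}(t,0), where the sum is over all subsets H of the edge set of G. -/

import Mathlib

/-!
Write `r = |V| - k` for the rank. Expanding both factors by the subset expansion, the summand
for a fixed `H` becomes a double sum over `A ⊆ H ⊆ C`: the restriction contributes
`(-1)^(r H - r A) (t-1)^(|A| - r A)` and the contraction, whose components on `B` are those of
`G|(H ∪ B)`, contributes `(t-1)^(r E - r C) (-1)^(|C \ H| - r C + r H)`. The ranks of `H`
cancel in the sign, leaving `(-1)^|C \ H|` times a weight depending only on `A` and `C`.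
Summing over `H` first, the alternating sum over the interval `[A, C]` vanishes unless `A = C`,
and the diagonal weights are the terms of the subset expansion of `χ_G(t,t)`.
-/

/-- A finite multigraph: vertices, edges, and an endpoint map allowing loops
and parallel edges. -/
structure Multigraph where
  V : Type
  E : Type
  [fintypeV : Fintype V]
  [fintypeE : Fintype E]
  [decEqV : DecidableEq V]
  [decEqE : DecidableEq E]
  ends : E → Sym2 V

attribute [instance] Multigraph.fintypeV Multigraph.fintypeE
  Multigraph.decEqV Multigraph.decEqE

namespace Multigraph

/-- The simple graph on `G.V` whose adjacency is induced by the edges in `H`. -/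
def sg (G : Multigraph) (H : Finset G.E) : SimpleGraph G.V :=
  SimpleGraph.fromRel (fun x y => ∃ e ∈ H, G.ends e = s(x, y))

/-- Number of connected components of the spanning subgraph `G|H`. -/
noncomputable def k (G : Multigraph) (H : Finset G.E) : ℕ :=
  Nat.card (G.sg H).ConnectedComponent

/-- The Tutte polynomial of `G` (via the Whitney rank / subset expansion, which is
the closed form of the deletion-contraction recursion), evaluated at `x`, `y`.
Here `k A - k univ = r(E) - r(A)` and `A.card + k A - card V = |A| - r(A)`. -/
noncomputable def tutteEval (G : Multigraph) {R : Type} [CommRing R] (x y : R) : R :=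
  ∑ A : Finset G.E,
    (x - 1) ^ (G.k A - G.k Finset.univ) *
      (y - 1) ^ (A.card + G.k A - Fintype.card G.V)

/-- A loop is an edge joining a vertex to itself. -/
def IsLoop (G : Multigraph) (e : G.E) : Prop := (G.ends e).IsDiag

/-- `e ∈ H` is a bridge of the spanning subgraph `G|H`: deleting it changes
(necessarily increases) the number of connected components. -/
def IsBridgeIn (G : Multigraph) (H : Finset G.E) (e : G.E) : Prop :=
  G.k (H.erase e) ≠ G.k H

/-- `e` is contained in a cycle of `G|H`: it is a loop (a cycle of length one) or its two
(distinct) endpoints remain connected after deleting it. -/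
def MemCycle (G : Multigraph) (H : Finset G.E) (e : G.E) : Prop :=
  ∃ x y, G.ends e = s(x, y) ∧ (x = y ∨ (G.sg (H.erase e)).Reachable x y)

/-- `G|H`: restriction (spanning subgraph) to the edges of `H`. -/
def restrict (G : Multigraph) (H : Finset G.E) : Multigraph where
  V := G.V
  E := {e : G.E // e ∈ H}
  ends := fun e => G.ends e.1

/-- `G/H`: contraction of all the edges of `H`. -/
noncomputable def contract (G : Multigraph) (H : Finset G.E) : Multigraph where
  V := (G.sg H).ConnectedComponent
  E := {e : G.E // e ∉ H}
  fintypeV := Fintype.ofFinite _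
  decEqV := Classical.decEq _
  ends := fun e => (G.ends e.1).map (SimpleGraph.connectedComponentMk (G.sg H))

end Multigraph

lemma neg_one_pow_sub_mul_neg_one_pow_sub {R : Type*} [Ring R] {a b c : ℕ} (ha : c ≤ a)
    (hb : c ≤ b) : (-1 : R) ^ (a - c) * (-1) ^ (b - c) = (-1) ^ (a + b) := by
  obtain ⟨a, rfl⟩ := Nat.exists_eq_add_of_le ha
  obtain ⟨b, rfl⟩ := Nat.exists_eq_add_of_le hb
  rw [Nat.add_sub_cancel_left, Nat.add_sub_cancel_left,
    show c + a + (c + b) = a + b + 2 * c by ring, pow_add _ (a + b), pow_mul, neg_one_sq,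
    one_pow, mul_one, pow_add]

namespace Finset
variable {α : Type*} [DecidableEq α]

lemma sum_Icc_neg_one_pow_card_sdiff {R : Type*} [Ring R] (A C : Finset α) :
    ∑ H ∈ Icc A C, (-1 : R) ^ #(C \ H) = if A = C then 1 else 0 := by
  by_cases hAC : A ⊆ C
  · have : ∑ H ∈ Icc A C, (-1 : R) ^ #(C \ H) = ∑ D ∈ (C \ A).powerset, (-1 : R) ^ #D := by
      refine sum_nbij' (C \ ·) (C \ ·) (fun H hH => ?_) (fun D hD => ?_) (fun H hH => ?_)
        (fun D hD => ?_) (fun _ _ => rfl)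
      all_goals simp only [mem_Icc, mem_powerset] at *
      · exact sdiff_subset_sdiff subset_rfl hH.1
      · exact ⟨subset_sdiff.2 ⟨hAC, disjoint_sdiff.mono_right hD⟩, sdiff_subset⟩
      · exact sdiff_sdiff_eq_self hH.2
      · exact sdiff_sdiff_eq_self (hD.trans sdiff_subset)
    have hsum := congrArg (Int.cast : ℤ → R) (sum_powerset_neg_one_pow_card (x := C \ A))
    push_cast at hsum
    rw [this, hsum]
    exact if_congr (sdiff_eq_empty_iff_subset.trans ⟨hAC.antisymm, fun h => h ▸ subset_rfl⟩)
      rfl rfl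
  · rw [Icc_eq_empty (fun h => hAC h), sum_empty, if_neg (fun h => hAC h.le)]

lemma sum_sum_powerset_sum_superset_comm [Fintype α] {M : Type*} [AddCommMonoid M]
    (f : Finset α → Finset α → Finset α → M) :
    ∑ H, ∑ A ∈ H.powerset, ∑ C with H ⊆ C, f A H C =
      ∑ A, ∑ C, ∑ H ∈ Icc A C, f A H C := by
  rw [sum_comm' (t' := univ) (s' := fun A => {H | A ⊆ H}) (by simp)]
  refine sum_congr rfl fun A _ => ?_
  exact sum_comm' (by simp [mem_Icc])

lemma sum_map_subtype_eq_sum_powerset {M : Type*} [AddCommMonoid M] (H : Finset α)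
    (f : Finset α → M) :
    ∑ A : Finset {e // e ∈ H}, f (A.map (Function.Embedding.subtype _)) =
      ∑ A ∈ H.powerset, f A := by
  refine sum_nbij' (fun A => A.map (Function.Embedding.subtype _)) (fun A => A.subtype (· ∈ H))
    (fun A _ => ?_) (fun _ _ => mem_univ _) (fun A _ => ?_) (fun A hA => ?_) (fun _ _ => rfl)
  · exact mem_powerset.2 fun _ he => property_of_mem_map_subtype A he
  · ext; simp
  · exact subtype_map_of_mem (mem_powerset.1 hA)

lemma sum_union_map_subtype_eq_sum_superset [Fintype α] {M : Type*} [AddCommMonoid M]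
    (H : Finset α) (f : Finset α → M) :
    ∑ B : Finset {e // e ∉ H}, f (H ∪ B.map (Function.Embedding.subtype _)) =
      ∑ C with H ⊆ C, f C := by
  refine sum_nbij' (fun B => H ∪ B.map (Function.Embedding.subtype _))
    (fun C => C.subtype (· ∉ H))
    (fun B _ => ?_) (fun _ _ => mem_univ _) (fun B _ => ?_) (fun C hC => ?_) (fun _ _ => rfl)
  · simp
  · ext e; simp [e.2]
  · ext e
    by_cases he : e ∈ H <;> simp_all [subset_iff]

end Finset

namespace SimpleGraph

variable {V W α : Type*} {G : SimpleGraph V}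

theorem Reachable.eq_of_forall_adj {f : V → α} (hf : ∀ u v, G.Adj u v → f u = f v) {u v : V}
    (h : G.Reachable u v) : f u = f v :=
  Relation.reflTransGen_le_of_equivalence_of_le (r := fun u v => f u = f v)
    ⟨fun _ => rfl, Eq.symm, Eq.trans⟩ hf u v ((reachable_iff_reflTransGen u v).1 h)

theorem card_connectedComponent_le_sup_edge [Finite V] (x y : V) :
    Nat.card G.ConnectedComponent ≤ Nat.card (G ⊔ edge x y).ConnectedComponent + 1 := by
  classical
  -- merging the components of `x` and `y` is constant along `G ⊔ edge x y`
  let merge (c : G.ConnectedComponent) : G.ConnectedComponent :=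
    if c = G.connectedComponentMk x then G.connectedComponentMk y else c
  have hmerge : ∀ u v, (G ⊔ edge x y).Reachable u v →
      merge (G.connectedComponentMk u) = merge (G.connectedComponentMk v) := by
    refine fun u v h => h.eq_of_forall_adj (f := fun w => merge (G.connectedComponentMk w))
      fun a b hab => ?_
    rw [sup_adj, edge_adj] at hab
    rcases hab with hab | ⟨(⟨rfl, rfl⟩ | ⟨rfl, rfl⟩), -⟩
    · rw [ConnectedComponent.sound hab.reachable]
    all_goals simp [merge]
  let ι (c : G.ConnectedComponent) : Option (G ⊔ edge x y).ConnectedComponent :=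
    if c = G.connectedComponentMk y then none else some (c.map (Hom.ofLE le_sup_left))
  have hι : Function.Injective ι := by
    intro c d hcd
    induction c using ConnectedComponent.ind with | h u => ?_
    induction d using ConnectedComponent.ind with | h v => ?_
    simp only [ι] at hcd
    split_ifs at hcd with hu hv hv
    · exact hu.trans hv.symm
    · have := hmerge u v (ConnectedComponent.exact (Option.some_injective _ hcd))
      simp only [merge] at this
      split_ifs at this with hux hvx hvx
      · exact hux.trans hvx.symm
      · exact absurd this.symm hv
      · exact absurd this hu
      · exact this
  simpa using Nat.card_le_card_of_injective ι hι

theorem card_connectedComponent_eq_of_surjective {Q : SimpleGraph W} {f : V → W}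
    (hf : Function.Surjective f) (hfiber : ∀ u v, f u = f v → G.Reachable u v)
    (hG : ∀ u v, G.Adj u v → Q.Reachable (f u) (f v))
    (hQ : ∀ c d, Q.Adj c d → ∃ u v, f u = c ∧ f v = d ∧ G.Reachable u v) :
    Nat.card G.ConnectedComponent = Nat.card Q.ConnectedComponent := by
  have reachable_of_reachable :
      ∀ {c d}, Q.Reachable c d → ∀ u v, f u = c → f v = d → G.Reachable u v := by
    intro c d h
    rw [reachable_iff_reflTransGen] at h
    induction h with
    | refl => rintro u v rfl hv; exact hfiber u v hv.symm
    | tail _ hadj ih =>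
      obtain ⟨u', v', rfl, rfl, huv'⟩ := hQ _ _ hadj
      intro u v hu hv
      exact ((ih u u' hu rfl).trans huv').trans (hfiber v' v hv.symm)
  let F : G.ConnectedComponent → Q.ConnectedComponent :=
    ConnectedComponent.lift (fun v => Q.connectedComponentMk (f v)) fun _ _ p _ =>
      p.reachable.eq_of_forall_adj fun a b hab => ConnectedComponent.sound (hG a b hab)
  refine Nat.card_eq_of_bijective F ⟨fun c d hcd => ?_, fun c => ?_⟩
  · induction c using ConnectedComponent.ind with | h u => ?_
    induction d using ConnectedComponent.ind with | h v => ?_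
    exact ConnectedComponent.sound
      (reachable_of_reachable (ConnectedComponent.exact hcd) u v rfl rfl)
  · induction c using ConnectedComponent.ind with | h c => ?_
    obtain ⟨v, rfl⟩ := hf c
    exact ⟨G.connectedComponentMk v, rfl⟩

end SimpleGraph

namespace Multigraph

open Finset SimpleGraph

variable (G : Multigraph) {R : Type} [CommRing R]

lemma sg_adj_iff {H : Finset G.E} {x y : G.V} :
    (G.sg H).Adj x y ↔ x ≠ y ∧ ∃ e ∈ H, G.ends e = s(x, y) := by
  refine ⟨?_, fun ⟨hne, e, he, hs⟩ => ⟨hne, Or.inl ⟨e, he, hs⟩⟩⟩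
  rintro ⟨hne, ⟨e, he, hs⟩ | ⟨e, he, hs⟩⟩
  · exact ⟨hne, e, he, hs⟩
  · exact ⟨hne, e, he, hs.trans Sym2.eq_swap⟩

lemma reachable_sg_of_mem {A : Finset G.E} {e : G.E} (he : e ∈ A) {x y : G.V}
    (hxy : G.ends e = s(x, y)) : (G.sg A).Reachable x y := by
  rcases eq_or_ne x y with rfl | hne
  · rfl
  · exact ((G.sg_adj_iff).2 ⟨hne, e, he, hxy⟩).reachable

lemma sg_mono : Monotone G.sg := fun _ _ hAB _ _ hxy =>
  let ⟨hne, e, he, hs⟩ := (G.sg_adj_iff).1 hxy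
  (G.sg_adj_iff).2 ⟨hne, e, hAB he, hs⟩

lemma k_anti : Antitone G.k := fun _ _ hAB =>
  ConnectedComponent.card_le_card_of_le (G.sg_mono hAB)

lemma sg_insert {A : Finset G.E} {e : G.E} {x y : G.V} (hxy : G.ends e = s(x, y)) :
    G.sg (insert e A) = G.sg A ⊔ edge x y := by
  ext u v
  simp only [sup_adj, edge_adj, sg_adj_iff, mem_insert, exists_eq_or_imp, hxy, Sym2.eq_iff]
  grind

lemma k_le_k_insert_add_one (A : Finset G.E) (e : G.E) : G.k A ≤ G.k (insert e A) + 1 := by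
  obtain ⟨x, y, hxy⟩ : ∃ x y, G.ends e = s(x, y) := Sym2.exists.1 ⟨_, rfl⟩
  rw [k, k, G.sg_insert hxy]
  exact card_connectedComponent_le_sup_edge x y

lemma k_le_k_union_add_card (A B : Finset G.E) : G.k A ≤ G.k (A ∪ B) + #B := by
  induction B using Finset.induction_on with
  | empty => simp
  | insert e B he ih =>
    rw [union_insert, card_insert_of_notMem he]
    have := G.k_le_k_insert_add_one (A ∪ B) e
    omega

lemma k_restrict (H : Finset G.E) (A : Finset (G.restrict H).E) :
    (G.restrict H).k A = G.k (A.map (Function.Embedding.subtype _)) := by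
  unfold k
  congr 2
  ext x y
  rw [(G.restrict H).sg_adj_iff, G.sg_adj_iff (x := x) (y := y)]
  refine and_congr_right fun _ =>
    ⟨fun ⟨e, he, hs⟩ => ⟨e.1, mem_map_of_mem _ he, hs⟩, ?_⟩
  rintro ⟨_, hmem, hs⟩
  obtain ⟨e, heA, rfl⟩ := mem_map.1 hmem
  exact ⟨e, heA, hs⟩

lemma k_restrict_univ (H : Finset G.E) : (G.restrict H).k univ = G.k H := by
  rw [k_restrict]
  exact congrArg G.k attach_map_val

lemma card_contract_V (H : Finset G.E) : Fintype.card (G.contract H).V = G.k H :=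
  Nat.card_eq_fintype_card.symm

lemma k_contract (H : Finset G.E) (B : Finset (G.contract H).E) :
    (G.contract H).k B = G.k (H ∪ B.map (Function.Embedding.subtype _)) := by
  refine (card_connectedComponent_eq_of_surjective (f := (G.sg H).connectedComponentMk)
    Quot.mk_surjective (fun u v huv => ?_) (fun u v huv => ?_) (fun c d hcd => ?_)).symm
  · exact (ConnectedComponent.exact huv).mono (G.sg_mono subset_union_left)
  · obtain ⟨-, e, he, hs⟩ := (G.sg_adj_iff).1 huv
    rcases mem_union.1 he with heH | heB
    · rw [ConnectedComponent.sound (G.reachable_sg_of_mem heH hs)]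
      exact Reachable.refl _
    · obtain ⟨b, hb, rfl⟩ := mem_map.1 heB
      refine (G.contract H).reachable_sg_of_mem hb ?_
      change Sym2.map _ (G.ends b.1) = _
      rw [show G.ends b.1 = s(u, v) from hs]
      rfl
  · obtain ⟨-, b, hb, hs⟩ := ((G.contract H).sg_adj_iff).1 hcd
    obtain ⟨p, q, hpq⟩ : ∃ p q, G.ends b.1 = s(p, q) := Sym2.exists.1 ⟨_, rfl⟩
    have hreach : (G.sg (H ∪ B.map (Function.Embedding.subtype _))).Reachable p q :=
      G.reachable_sg_of_mem (mem_union_right _ (mem_map_of_mem _ hb)) hpq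
    change Sym2.map (G.sg H).connectedComponentMk (G.ends b.1) = s(c, d) at hs
    rw [hpq, Sym2.map_mk] at hs
    rcases Sym2.eq_iff.1 hs with ⟨hp, hq⟩ | ⟨hp, hq⟩
    · exact ⟨p, q, hp, hq, hreach⟩
    · exact ⟨q, p, hq, hp, hreach.symm⟩


lemma k_contract_univ (H : Finset G.E) : (G.contract H).k univ = G.k univ := by
  rw [k_contract]
  congr 1
  ext e
  by_cases he : e ∈ H
  · simp [he]
  · exact iff_of_true
      (mem_union_right _ (mem_map_of_mem _ (mem_univ (⟨e, he⟩ : {e // e ∉ H})))) (mem_univ e)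

lemma tutteEval_restrict (x y : R) (H : Finset G.E) :
    (G.restrict H).tutteEval x y =
      ∑ A ∈ H.powerset,
        (x - 1) ^ (G.k A - G.k H) * (y - 1) ^ (#A + G.k A - Fintype.card G.V) := by
  rw [← sum_map_subtype_eq_sum_powerset]
  refine sum_congr rfl fun (A : Finset {e // e ∈ H}) _ => ?_
  rw [k_restrict_univ, G.k_restrict H A, card_map]
  rfl

lemma tutteEval_contract (x y : R) (H : Finset G.E) :
    (G.contract H).tutteEval x y =
      ∑ C with H ⊆ C, (x - 1) ^ (G.k C - G.k univ) * (y - 1) ^ (#(C \ H) + G.k C - G.k H) := by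
  rw [← sum_union_map_subtype_eq_sum_superset]
  refine sum_congr rfl fun (B : Finset {e // e ∉ H}) _ => ?_
  rw [k_contract_univ, G.k_contract H B, card_contract_V, union_sdiff_cancel_left, card_map]
  · rfl
  · exact Finset.disjoint_left.2 fun _ heH heB => property_of_mem_map_subtype B heB heH

/-- The term of `χ_{G|H}(0,t) χ_{G/H}(t,0)` indexed by `A ⊆ H ⊆ C`, without its sign
`(-1)^|C \ H|`; it does not depend on `H`. -/
noncomputable def intervalWeight (t : R) (A C : Finset G.E) : R :=
  (-1) ^ (G.k A + G.k C) *
    ((t - 1) ^ (G.k C - G.k univ) * (t - 1) ^ (#A + G.k A - Fintype.card G.V))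

lemma intervalWeight_self (t : R) (A : Finset G.E) :
    G.intervalWeight t A A =
      (t - 1) ^ (G.k A - G.k univ) * (t - 1) ^ (#A + G.k A - Fintype.card G.V) := by
  rw [intervalWeight, (Even.add_self _).neg_one_pow, one_mul]

lemma tutteEval_restrict_mul_tutteEval_contract (t : R) (H : Finset G.E) :
    (G.restrict H).tutteEval 0 t * (G.contract H).tutteEval t 0 =
      ∑ A ∈ H.powerset, ∑ C with H ⊆ C, (-1) ^ #(C \ H) * G.intervalWeight t A C := by
  rw [tutteEval_restrict, tutteEval_contract, sum_mul_sum]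
  refine sum_congr rfl fun A hA => sum_congr rfl fun C hC => ?_
  have hHC : H ⊆ C := (mem_filter.1 hC).2
  -- these make the truncated subtractions in the exponents genuine
  have hA : G.k H ≤ G.k A := G.k_anti (mem_powerset.1 hA)
  have hC : G.k H ≤ #(C \ H) + G.k C := by
    simpa [union_sdiff_of_subset hHC, add_comm] using G.k_le_k_union_add_card H (C \ H)
  have hsign : (-1 : R) ^ (G.k A - G.k H) * (-1) ^ (#(C \ H) + G.k C - G.k H) =
      (-1) ^ #(C \ H) * (-1) ^ (G.k A + G.k C) := by
    rw [neg_one_pow_sub_mul_neg_one_pow_sub hA hC]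
    ring
  rw [intervalWeight, zero_sub]
  linear_combination
    ((t - 1) ^ (G.k C - G.k univ) * (t - 1) ^ (#A + G.k A - Fintype.card G.V)) * hsign

theorem tutteEval_self_eq_sum (t : R) :
    G.tutteEval t t = ∑ H, (G.restrict H).tutteEval 0 t * (G.contract H).tutteEval t 0 := by
  calc G.tutteEval t t = ∑ A, G.intervalWeight t A A :=
        sum_congr rfl fun A _ => (G.intervalWeight_self t A).symm
    _ = ∑ A, ∑ C, ∑ H ∈ Icc A C, (-1) ^ #(C \ H) * G.intervalWeight t A C := by
        simp_rw [← sum_mul, sum_Icc_neg_one_pow_card_sdiff, ite_mul, one_mul, zero_mul,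
          sum_ite_eq, if_pos (mem_univ _)]
    _ = ∑ H, ∑ A ∈ H.powerset, ∑ C with H ⊆ C, (-1) ^ #(C \ H) * G.intervalWeight t A C :=
        (sum_sum_powerset_sum_superset_comm _).symm
    _ = _ := sum_congr rfl fun H _ => (G.tutteEval_restrict_mul_tutteEval_contract t H).symm

end Multigraph

open Multigraph

/-- For any graph `G`, the symmetrized Tutte polynomial satisfies
`χ_G(t,t) = ∑_{H ⊆ E(G)} χ_{G|H}(0,t) · χ_{G/H}(t,0)`. -/
theorem symmetrized_tutte_state_sum (G : Multigraph) :
    G.tutteEval (Polynomial.X : Polynomial ℤ) Polynomial.X =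
      ∑ H : Finset G.E,
        (G.restrict H).tutteEval (0 : Polynomial ℤ) Polynomial.X *
          (G.contract H).tutteEval (Polynomial.X : Polynomial ℤ) 0 :=
  G.tutteEval_self_eq_sum Polynomial.X
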